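/- Let l : ℝ → ℝ be continuous and strictly increasing, let λ ∈ ℝ, and let X ∈ 𝒳_l. Then the function g_X(t) = E[l(−X−t)] − λ is continuous and strictly decreasing on ℝ. Moreover, if there exist t_u, t_l ∈ ℝ such that g_X(t_u) ≤ 0 < g_X(t_l), then SR_{l,λ}(X) is finite and is the unique root of g_X, i.e., g_X(SR_{l,λ}(X)) = 0 and g_X(t) ≠ 0 for every t ≠ SR_{l,λ}(X). -/

import Mathlib

/-!
Since `l` is strictly increasing, `t ↦ l (-X ω - t)` is strictly decreasing for every `ω`, so the
expectation is strictly decreasing, and continuous by dominated convergence (on a neighbourhood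
of `t₀` the integrand is squeezed between its values at `t₀ ± 1`). Under the bracketing condition
the intermediate value theorem gives a root `r`, and strict monotonicity turns the sublevel set
`{t | E[l(-X-t)] ≤ λ}` into `[r, ∞)`, whose infimum is `r`.
-/

open MeasureTheory Set

section Integral

variable {Ω : Type*} [MeasurableSpace Ω] {μ : Measure Ω}

theorem integral_lt_integral_of_forall_lt [NeZero μ] {f g : Ω → ℝ}
    (hf : Integrable f μ) (hg : Integrable g μ) (hfg : ∀ ω, f ω < g ω) :
    ∫ ω, f ω ∂μ < ∫ ω, g ω ∂μ := by
  have hsupport : Function.support (fun ω => g ω - f ω) = univ :=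
    eq_univ_of_forall fun ω => (sub_pos.2 (hfg ω)).ne'
  have hpos : 0 < ∫ ω, g ω - f ω ∂μ := by
    rw [integral_pos_iff_support_of_nonneg (fun ω => (sub_pos.2 (hfg ω)).le) (hg.sub hf),
      hsupport, pos_iff_ne_zero, Measure.measure_univ_ne_zero]
    exact NeZero.ne μ
  rw [integral_sub hg hf] at hpos
  linarith

theorem continuous_integral_of_antitone {F : ℝ → Ω → ℝ}
    (hF_int : ∀ t, Integrable (F t) μ) (hF_cont : ∀ ω, Continuous (F · ω))
    (hF_anti : ∀ ω, Antitone (F · ω)) :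
    Continuous fun t => ∫ ω, F t ω ∂μ := by
  refine continuous_iff_continuousAt.2 fun t₀ => ?_
  refine continuousAt_of_dominated (bound := fun ω => |F (t₀ + 1) ω| + |F (t₀ - 1) ω|)
    (Filter.Eventually.of_forall fun t => (hF_int t).aestronglyMeasurable) ?_
    ((hF_int _).abs.add (hF_int _).abs) (ae_of_all _ fun ω => (hF_cont ω).continuousAt)
  filter_upwards [Ioo_mem_nhds (sub_one_lt t₀) (lt_add_one t₀)] with t ht
  refine ae_of_all _ fun ω => ?_
  calc ‖F t ω‖ ≤ max |F (t₀ + 1) ω| |F (t₀ - 1) ω| :=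
        abs_le_max_abs_abs (hF_anti ω ht.2.le) (hF_anti ω ht.1.le)
    _ ≤ |F (t₀ + 1) ω| + |F (t₀ - 1) ω| := max_le_add_of_nonneg (abs_nonneg _) (abs_nonneg _)

theorem strictAnti_integral {F : ℝ → Ω → ℝ} [NeZero μ]
    (hF_int : ∀ t, Integrable (F t) μ) (hF_anti : ∀ ω, StrictAnti (F · ω)) :
    StrictAnti fun t => ∫ ω, F t ω ∂μ :=
  fun _ _ hst => integral_lt_integral_of_forall_lt (hF_int _) (hF_int _) fun ω => hF_anti ω hst

end Integral

theorem StrictAnti.setOf_le_eq_Ici {α β : Type*} [LinearOrder α] [Preorder β] {φ : α → β}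
    (hφ : StrictAnti φ) {r : α} :
    {t | φ t ≤ φ r} = Ici r :=
  ext fun _ => hφ.le_iff_ge

/-- For `l` continuous and strictly increasing and `X ∈ 𝒳_l`, the function
`g_X(t) = E[l(-X-t)] - λ` is continuous and strictly decreasing; moreover, under the
bracketing condition, `SR_{l,λ}(X)` is finite (the defining set is nonempty and bounded
below) and is the unique root of `g_X`. -/
theorem ubsr_unique_root_of_g
    {Ω : Type*} [MeasurableSpace Ω] (P : Measure Ω) [IsProbabilityMeasure P]
    (l : ℝ → ℝ) (lam : ℝ) (X : Ω → ℝ)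
    (hl_cont : Continuous l)
    (hl_mono : StrictMono l)
    (hX : ∀ t : ℝ, Integrable (fun ω => l (-X ω - t)) P) :
    Continuous (fun t : ℝ => (∫ ω, l (-X ω - t) ∂P) - lam) ∧
    StrictAnti (fun t : ℝ => (∫ ω, l (-X ω - t) ∂P) - lam) ∧
    (∀ tu tl : ℝ,
      (∫ ω, l (-X ω - tu) ∂P) - lam ≤ 0 →
      0 < (∫ ω, l (-X ω - tl) ∂P) - lam →
      ({t : ℝ | (∫ ω, l (-X ω - t) ∂P) ≤ lam}).Nonempty ∧
      BddBelow {t : ℝ | (∫ ω, l (-X ω - t) ∂P) ≤ lam} ∧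
      (∫ ω, l (-X ω - sInf {t : ℝ | (∫ ω, l (-X ω - t) ∂P) ≤ lam}) ∂P) - lam = 0 ∧
      (∀ t : ℝ, t ≠ sInf {t : ℝ | (∫ ω, l (-X ω - t) ∂P) ≤ lam} →
        (∫ ω, l (-X ω - t) ∂P) - lam ≠ 0)) := by
  have hloss_anti : ∀ ω, StrictAnti fun t => l (-X ω - t) :=
    fun ω _ _ hst => hl_mono (sub_lt_sub_left hst _)
  have hφ_cont : Continuous fun t => ∫ ω, l (-X ω - t) ∂P :=
    continuous_integral_of_antitone hX (fun ω => hl_cont.comp (continuous_sub_left _))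
      fun ω => (hloss_anti ω).antitone
  have hφ_anti : StrictAnti fun t => ∫ ω, l (-X ω - t) ∂P := strictAnti_integral hX hloss_anti
  refine ⟨hφ_cont.sub continuous_const, fun _ _ hst => sub_lt_sub_right (hφ_anti hst) lam,
    fun tu tl htu htl => ?_⟩
  obtain ⟨r, hr : ∫ ω, l (-X ω - r) ∂P = lam⟩ : lam ∈ range fun t => ∫ ω, l (-X ω - t) ∂P :=
    mem_range_of_exists_le_of_exists_ge hφ_cont ⟨tu, sub_nonpos.1 htu⟩ ⟨tl, (sub_pos.1 htl).le⟩
  have hS : {t : ℝ | (∫ ω, l (-X ω - t) ∂P) ≤ lam} = Ici r := hr ▸ hφ_anti.setOf_le_eq_Ici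
  rw [hS, csInf_Ici]
  exact ⟨nonempty_Ici, bddBelow_Ici, sub_eq_zero.2 hr,
    fun t ht h => ht (hφ_anti.injective ((sub_eq_zero.1 h).trans hr.symm))⟩
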